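/- Every \alpha \in \Delta_0^+ satisfies exactly one of the following three conditions: (a) \alpha \in \Delta_0'^+, i.e. the coordinates of \alpha at 0 and 2n both vanish; (b) \alpha + \sigma(\alpha) \in \mathbb{Z}_{>0}\cdot\delta; (c) there exists \beta \in \Delta_0' with \sigma(\beta) \ne \beta such that \alpha + \sigma(\alpha) = \delta + \beta + \sigma(\beta). -/

import Mathlib

/-!
In the basis `ε_1, …, ε_{2n}` of `ℤ^{2n}` with `α_k = ε_k - ε_{k+1}` (`1 ≤ k < 2n`) and
`α_{2n} = ε_{2n-1} + ε_{2n}`, the form `B` restricted to `α_0 = 0` is the standard sum of squares.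
For `α ∈ Δ₀⁺` with `α_{2n} ≠ 0` the ε-coordinates sum to `2 α_{2n} ≥ 2` while their squares sum
to `2`, so `α = ε_{p+1} + ε_{q+1}` with `p < q` and `α_{2n} = 1`. A direct computation then gives
`α + σα = δ + β + σβ` for the root `β = ε_{p+1} - ε_{2n-q}` of `Δ₀'`: it vanishes when
`p + q = 2n - 1`, which is case (b), and is otherwise not `σ`-fixed, which is case (c).

The cases are disjoint because the `0`-th coordinate of `α + σα` is `α_{2n}`, which is `0` in (a),
`m > 0` in (b) and `1` in (c). So (b) and (c) together force `m = 1` and give `β ∈ Δ₀'` with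
`σβ = -β`; for such `β` the squared length `∑ (β_{k+1} - β_k)²` is twice a sum with the parity of
`β_n - β_0 = 0`, so it cannot be `2`.
-/

namespace Stmt5

/-- The root lattice `Q = ⨁_{i ∈ I} ℤ α_i` for `I = {0,1,…,2n}`. -/
abbrev Q (n : ℕ) := Fin (2 * n + 1) → ℤ

/-- The edges of the Dynkin diagram of affine type `D_{2n}^{(1)}`. -/
abbrev edge (n i j : ℕ) : Prop :=
  (i + 1 = j ∧ 2 ≤ i ∧ j ≤ 2 * n - 1) ∨ (j + 1 = i ∧ 2 ≤ j ∧ i ≤ 2 * n - 1) ∨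
  (i = 0 ∧ j = 2) ∨ (i = 2 ∧ j = 0) ∨ (i = 1 ∧ j = 2) ∨ (i = 2 ∧ j = 1) ∨
  (i = 2 * n - 2 ∧ j = 2 * n) ∨ (i = 2 * n ∧ j = 2 * n - 2)

/-- The generalized Cartan matrix of type `D_{2n}^{(1)}`. -/
def CM (n : ℕ) (i j : Fin (2 * n + 1)) : ℤ :=
  if i = j then 2 else if edge n (i : ℕ) (j : ℕ) then -1 else 0

/-- The symmetric bilinear form `B` on `Q` determined by the Cartan matrix. -/
def B (n : ℕ) (v w : Q n) : ℤ := ∑ i, ∑ j, v i * CM n i j * w j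

/-- The set of positive real roots. -/
def ΔrePos (n : ℕ) : Set (Q n) := {v | (∀ i, 0 ≤ v i) ∧ B n v v = 2}

/-- The set `Δ₀⁺` of positive roots of the finite root system of type `D_{2n}`. -/
def Δ0Pos (n : ℕ) : Set (Q n) := {v | v ∈ ΔrePos n ∧ v 0 = 0}

/-- The primitive null root `δ`. -/
def δ (n : ℕ) : Q n := fun i =>
  if (i : ℕ) = 0 ∨ (i : ℕ) = 1 ∨ (i : ℕ) = 2 * n - 1 ∨ (i : ℕ) = 2 * n then 1 else 2

/-- The admissible diagram automorphism `σ : α_i ↦ α_{2n-i}` (on coordinates). -/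
def σmap (n : ℕ) (v : Q n) : Q n := fun i => v ⟨2 * n - (i : ℕ), by omega⟩

/-- The `σ`-stable subsystem `Δ₀'` of type `A_{2n-1}` supported on `I ∖ {0, 2n}`. -/
def Δ0' (n : ℕ) : Set (Q n) :=
  {v | B n v v = 2 ∧ v 0 = 0 ∧ v ⟨2 * n, by omega⟩ = 0}

/-- The positive part `Δ₀'⁺ = Δ₀' ∩ ℕ^I`. -/
def Δ0'Pos (n : ℕ) : Set (Q n) := {v | v ∈ Δ0' n ∧ ∀ i, 0 ≤ v i}

open Finset

variable {n : ℕ}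

def coord (n : ℕ) (v : Q n) (k : ℕ) : ℤ := if h : k < 2 * n + 1 then v ⟨k, h⟩ else 0

@[simp] lemma coord_val (v : Q n) (k : Fin (2 * n + 1)) : coord n v k = v k := by
  simp [coord, k.isLt]

lemma coord_zero (v : Q n) : coord n v 0 = v 0 := by
  simp [coord]

lemma coord_last (v : Q n) : coord n v (2 * n) = v ⟨2 * n, by omega⟩ := by
  simp [coord]

lemma σmap_apply (v : Q n) (k : Fin (2 * n + 1)) : σmap n v k = coord n v (2 * n - k) := by
  simp [σmap, coord, show 2 * n - (k : ℕ) < 2 * n + 1 by omega]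

lemma add_σmap_apply_zero (v : Q n) : (v + σmap n v) 0 = v 0 + v ⟨2 * n, by omega⟩ := rfl

lemma δ_apply_zero : δ n 0 = 1 := by
  simp [δ]

/-- The coefficient of `ε_{m+1}` in `∑ a k • α_k` (when `a 0 = 0`), in the realisation of `D_{2n}`
in which `α_k = ε_k - ε_{k+1}` for `1 ≤ k < 2n` and `α_{2n} = ε_{2n-1} + ε_{2n}`. -/
def epsCoord (n : ℕ) (a : ℕ → ℤ) (m : ℕ) : ℤ :=
  a (m + 1) - a m + if m = 2 * n - 2 then a (2 * n) else 0

lemma sum_range_epsCoord (hn : 1 ≤ n) (a : ℕ → ℤ) {k : ℕ} (hk : k ≤ 2 * n) :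
    ∑ m ∈ range k, epsCoord n a m = a k - a 0 + if 2 * n - 1 ≤ k then a (2 * n) else 0 := by
  induction k with
  | zero => simp; omega
  | succ k ih =>
    rw [Finset.sum_range_succ, ih (by omega), epsCoord]
    split_ifs <;> omega

lemma sum_epsCoord_sq (hn : 1 ≤ n) (a : ℕ → ℤ) (h0 : a 0 = 0) :
    ∑ m ∈ range (2 * n), epsCoord n a m ^ 2 = 2 * ∑ i ∈ range (2 * n + 1), a i ^ 2 -
      2 * (∑ i ∈ range (2 * n + 1), (if 1 ≤ i ∧ i ≤ 2 * n - 2 then a i * a (i + 1) else 0) +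
        a (2 * n - 2) * a (2 * n)) := by
  obtain ⟨M, hM⟩ : ∃ M, 2 * n = M + 2 := ⟨2 * n - 2, by omega⟩
  simp only [epsCoord, hM, Nat.add_sub_cancel]
  have head : ∑ m ∈ range M, (a (m + 1) - a m + if m = M then a (M + 2) else 0) ^ 2 =
      ∑ m ∈ range M, a (m + 1) ^ 2 + ∑ m ∈ range M, a m ^ 2 -
        2 * ∑ m ∈ range M, a m * a (m + 1) := by
    rw [← Finset.sum_add_distrib, Finset.mul_sum, ← Finset.sum_sub_distrib]
    refine Finset.sum_congr rfl fun m hm => ?_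
    rw [if_neg (Finset.mem_range.mp hm).ne]
    ring
  have chain : ∀ i ≤ M, (if 1 ≤ i ∧ i ≤ M then a i * a (i + 1) else 0) = a i * a (i + 1) := by
    intro i hi
    split_ifs with h
    · rfl
    · obtain rfl : i = 0 := by omega
      simp [h0]
  have shift : ∑ m ∈ range M, a (m + 1) ^ 2 + a 0 ^ 2 = ∑ m ∈ range M, a m ^ 2 + a M ^ 2 := by
    rw [← Finset.sum_range_succ' (fun m => a m ^ 2), Finset.sum_range_succ]
  simp only [Finset.sum_range_succ _ (M + 1), Finset.sum_range_succ _ M,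
    Finset.sum_range_succ _ (M + 2), head, chain M le_rfl,
    Finset.sum_congr rfl fun i hi => chain i (Finset.mem_range.mp hi).le,
    if_pos, if_neg (show M + 1 ≠ M by omega), if_neg (show ¬ (1 ≤ M + 2 ∧ M + 2 ≤ M) by omega),
    if_neg (show ¬ (1 ≤ M + 1 ∧ M + 1 ≤ M) by omega)]
  rw [h0] at shift
  linear_combination shift

abbrev OrientedEdge (n i j : ℕ) : Prop :=
  (j = i + 1 ∧ 1 ≤ i ∧ i ≤ 2 * n - 2) ∨ (i = 0 ∧ j = 2) ∨ (i = 2 * n - 2 ∧ j = 2 * n)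

lemma edge_iff_orientedEdge (hn : 2 ≤ n) (i j : ℕ) :
    edge n i j ↔ OrientedEdge n i j ∨ OrientedEdge n j i := by
  omega

lemma CM_eq (hn : 2 ≤ n) (i j : Fin (2 * n + 1)) :
    CM n i j = 2 * (if (i : ℕ) = j then 1 else 0) - (if OrientedEdge n i j then 1 else 0) -
      (if OrientedEdge n j i then 1 else 0) := by
  simp only [CM, edge_iff_orientedEdge hn, Fin.ext_iff]
  split_ifs <;> omega

lemma sum_sum_orientedEdge (hn : 2 ≤ n) (f : ℕ → ℕ → ℤ) :
    ∑ i ∈ range (2 * n + 1), ∑ j ∈ range (2 * n + 1), (if OrientedEdge n i j then f i j else 0) =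
      ∑ i ∈ range (2 * n + 1), (if 1 ≤ i ∧ i ≤ 2 * n - 2 then f i (i + 1) else 0) +
        f 0 2 + f (2 * n - 2) (2 * n) := by
  have split : ∀ i j, (if OrientedEdge n i j then f i j else 0) =
      (if j = i + 1 then (if 1 ≤ i ∧ i ≤ 2 * n - 2 then f i j else 0) else 0) +
        (if j = 2 then (if i = 0 then f i j else 0) else 0) +
        (if j = 2 * n then (if i = 2 * n - 2 then f i j else 0) else 0) := by
    intro i j
    split_ifs <;> omega
  have chain : ∀ i ∈ range (2 * n + 1), (if i + 1 < 2 * n + 1 then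
      (if 1 ≤ i ∧ i ≤ 2 * n - 2 then f i (i + 1) else 0) else 0) =
      if 1 ≤ i ∧ i ≤ 2 * n - 2 then f i (i + 1) else 0 := by
    intro i _
    split_ifs <;> omega
  simp only [split, Finset.sum_add_distrib, Finset.sum_ite_eq', Finset.mem_range,
    Finset.sum_congr rfl chain, show 2 < 2 * n + 1 by omega, show 2 * n < 2 * n + 1 by omega,
    show 2 * n - 2 < 2 * n + 1 by omega, show 0 < 2 * n + 1 by omega, if_true]

lemma B_self_eq_sum_sum_orientedEdge (hn : 2 ≤ n) (v : Q n) :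
    B n v v = 2 * ∑ i ∈ range (2 * n + 1), coord n v i ^ 2 -
      2 * ∑ i ∈ range (2 * n + 1), ∑ j ∈ range (2 * n + 1),
        (if OrientedEdge n i j then coord n v i * coord n v j else 0) := by
  set a := coord n v
  have hB : B n v v = ∑ i ∈ range (2 * n + 1), ∑ j ∈ range (2 * n + 1),
      a i * (2 * (if i = j then 1 else 0) - (if OrientedEdge n i j then 1 else 0) -
        (if OrientedEdge n j i then 1 else 0)) * a j := by
    simp only [Finset.sum_range, B, CM_eq hn, a, coord_val]
  have expand : ∀ i j, a i * (2 * (if i = j then 1 else 0) - (if OrientedEdge n i j then 1 else 0) -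
        (if OrientedEdge n j i then 1 else 0)) * a j = 2 * (if i = j then a i * a j else 0) -
        (if OrientedEdge n i j then a i * a j else 0) -
          (if OrientedEdge n j i then a j * a i else 0) := by
    intro i j
    split_ifs <;> ring
  rw [hB]
  simp only [expand, Finset.sum_sub_distrib, ← Finset.mul_sum, Finset.sum_ite_eq,
    Finset.mem_range]
  rw [Finset.sum_comm (f := fun i j => if OrientedEdge n j i then a j * a i else 0),
    Finset.sum_congr rfl fun i hi => if_pos (Finset.mem_range.mp hi)]
  simp only [sq]
  ring

theorem B_self_eq_sum_epsCoord_sq (hn : 2 ≤ n) (v : Q n) (h0 : v 0 = 0) :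
    B n v v = ∑ m ∈ range (2 * n), epsCoord n (coord n v) m ^ 2 := by
  have ha0 : coord n v 0 = 0 := by rw [coord_zero, h0]
  rw [B_self_eq_sum_sum_orientedEdge hn, sum_sum_orientedEdge hn, sum_epsCoord_sq (by omega) _ ha0,
    ha0]
  ring

lemma B_self_eq_sum_sq_sub (hn : 2 ≤ n) (v : Q n) (h0 : v 0 = 0)
    (hlast : v ⟨2 * n, by omega⟩ = 0) :
    B n v v = ∑ m ∈ range (2 * n), (coord n v (m + 1) - coord n v m) ^ 2 := by
  simp [B_self_eq_sum_epsCoord_sq hn v h0, epsCoord, coord_last, hlast]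

lemma sum_range_indicator (p k : ℕ) :
    ∑ m ∈ range k, (if m = p then (1 : ℤ) else 0) = if p < k then 1 else 0 := by
  simp [Finset.sum_ite_eq']

lemma exists_pair_of_sum_sq_eq_two {N : ℕ} (e : ℕ → ℤ) (hsq : ∑ m ∈ range N, e m ^ 2 = 2)
    (hsum : 2 ≤ ∑ m ∈ range N, e m) :
    ∃ p q, p < q ∧ q < N ∧
      ∀ m < N, e m = (if m = p then 1 else 0) + (if m = q then 1 else 0) := by
  have hle : ∀ m ∈ range N, 0 ≤ e m ^ 2 - e m := fun m _ => sub_nonneg.mpr (Int.le_self_sq (e m))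
  have hzero : ∑ m ∈ range N, (e m ^ 2 - e m) = 0 := by
    have := Finset.sum_nonneg hle
    rw [Finset.sum_sub_distrib] at this ⊢
    omega
  have h01 : ∀ m ∈ range N, e m = if e m = 1 then 1 else 0 := by
    intro m hm
    have := (Finset.sum_eq_zero_iff_of_nonneg hle).mp hzero m hm
    have : e m * (e m - 1) = 0 := by linear_combination this
    rcases mul_eq_zero.mp this with h | h <;> split_ifs <;> omega
  have hcard : ((range N).filter (e · = 1)).card = 2 := by
    have : ∑ m ∈ range N, e m = ∑ m ∈ range N, if e m = 1 then 1 else 0 :=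
      Finset.sum_congr rfl h01
    rw [Finset.sum_boole] at this
    rw [Finset.sum_sub_distrib, hsq] at hzero
    omega
  obtain ⟨x, y, hxy, hs⟩ := Finset.card_eq_two.mp hcard
  have hmem : ∀ m, m < N ∧ e m = 1 ↔ m = x ∨ m = y := by
    intro m
    simpa using congrArg (m ∈ ·) hs
  have hx := ((hmem x).mpr (Or.inl rfl)).1
  have hy := ((hmem y).mpr (Or.inr rfl)).1
  have he : ∀ m < N, e m = if m = x ∨ m = y then 1 else 0 := by
    intro m hm
    rw [h01 m (Finset.mem_range.mpr hm)]
    simp only [← hmem m, hm, true_and]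
  rcases Nat.lt_or_gt_of_ne hxy with h | h
  · exact ⟨x, y, h, hy, fun m hm => by rw [he m hm]; split_ifs <;> omega⟩
  · exact ⟨y, x, h, hx, fun m hm => by rw [he m hm]; split_ifs <;> omega⟩

theorem exists_coord_eq_of_last_pos (hn : 2 ≤ n) (α : Q n) (h0 : α 0 = 0)
    (hB : B n α α = 2) (hlast : 0 < α ⟨2 * n, by omega⟩) :
    ∃ p q, p < q ∧ q < 2 * n ∧ ∀ k ≤ 2 * n, coord n α k =
      (if p < k then 1 else 0) + (if q < k then 1 else 0) - (if 2 * n - 1 ≤ k then 1 else 0) := by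
  have ha0 : coord n α 0 = 0 := by rw [coord_zero, h0]
  rw [← coord_last α] at hlast
  set a := coord n α
  have hsum := fun k (hk : k ≤ 2 * n) => sum_range_epsCoord (by omega) a hk
  obtain ⟨p, q, hpq, hq, he⟩ := exists_pair_of_sum_sq_eq_two (epsCoord n a)
    (B_self_eq_sum_epsCoord_sq hn α h0 ▸ hB)
    (by rw [hsum _ le_rfl, if_pos (by omega), ha0]; omega)
  have hpartial : ∀ k ≤ 2 * n, ∑ m ∈ range k, epsCoord n a m =
      (if p < k then 1 else 0) + (if q < k then 1 else 0) := by
    intro k hk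
    rw [Finset.sum_congr rfl fun m hm => he m (by simp at hm; omega), Finset.sum_add_distrib,
      sum_range_indicator, sum_range_indicator]
  have ha2n : a (2 * n) = 1 := by
    have := hsum _ le_rfl
    rw [hpartial _ le_rfl, if_pos (by omega), ha0] at this
    split_ifs at this <;> omega
  refine ⟨p, q, hpq, hq, fun k hk => ?_⟩
  have := hsum k hk
  rw [hpartial k hk, ha0, ha2n] at this
  split_ifs at this ⊢ <;> omega

/-- The root `ε_{p+1} - ε_{r+1}`, that is `±(α_{p+1} + ⋯ + α_r)`. -/
def segment (n p r : ℕ) : Q n := fun k => (if p < k then 1 else 0) - (if r < k then 1 else 0)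

lemma coord_segment (p r : ℕ) {k : ℕ} (hk : k ≤ 2 * n) :
    coord n (segment n p r) k = (if p < k then 1 else 0) - (if r < k then 1 else 0) := by
  simp [coord, segment, show k < 2 * n + 1 by omega]

lemma segment_self (p : ℕ) : segment n p p = 0 := by
  funext k
  simp [segment]

lemma segment_mem_Δ0' (hn : 2 ≤ n) {p r : ℕ} (hpr : p ≠ r) (hp : p < 2 * n) (hr : r < 2 * n) :
    segment n p r ∈ Δ0' n := by
  have hlast : segment n p r ⟨2 * n, by omega⟩ = 0 := by simp [segment]; omega
  refine ⟨?_, by simp [segment], hlast⟩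
  rw [B_self_eq_sum_sq_sub hn _ (by simp [segment]) hlast]
  have hstep : ∀ m ∈ range (2 * n), (coord n (segment n p r) (m + 1) -
      coord n (segment n p r) m) ^ 2 = (if m = p then 1 else 0) + (if m = r then 1 else 0) := by
    intro m hm
    simp only [Finset.mem_range] at hm
    rw [coord_segment p r (by omega), coord_segment p r (by omega)]
    split_ifs <;> omega
  rw [Finset.sum_congr rfl hstep, Finset.sum_add_distrib, sum_range_indicator,
    sum_range_indicator, if_pos hp, if_pos hr]
  norm_num

lemma σmap_segment_ne {p r : ℕ} (hpr : p ≠ r) (hp : p < 2 * n) (hsum : p + r ≠ 2 * n - 1) :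
    σmap n (segment n p r) ≠ segment n p r := by
  intro h
  have h1 := congrFun h ⟨p, by omega⟩
  have h2 := congrFun h ⟨p + 1, by omega⟩
  simp only [σmap, segment] at h1 h2
  split_ifs at h1 h2 <;> omega

lemma add_σmap_eq_of_coord_eq (hn : 2 ≤ n) {α : Q n} {p q : ℕ} (hpq : p < q) (hq : q < 2 * n)
    (hα : ∀ k ≤ 2 * n, coord n α k =
      (if p < k then 1 else 0) + (if q < k then 1 else 0) - (if 2 * n - 1 ≤ k then 1 else 0)) :
    α + σmap n α = δ n + segment n p (2 * n - 1 - q) + σmap n (segment n p (2 * n - 1 - q)) := by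
  funext k
  have hk := k.isLt
  simp only [Pi.add_apply, σmap_apply, ← coord_val α k, ← coord_val (segment n _ _) k,
    hα k (by omega), hα (2 * n - k) (by omega), coord_segment _ _ (show (k : ℕ) ≤ 2 * n by omega),
    coord_segment _ _ (show 2 * n - (k : ℕ) ≤ 2 * n by omega), δ]
  split_ifs <;> omega

theorem mem_Δ0'Pos_or_add_σmap_eq (hn : 2 ≤ n) {α : Q n} (hα : α ∈ Δ0Pos n) :
    (α ∈ Δ0'Pos n) ∨ (∃ m : ℤ, 0 < m ∧ α + σmap n α = m • δ n) ∨
      (∃ β ∈ Δ0' n, σmap n β ≠ β ∧ α + σmap n α = δ n + β + σmap n β) := by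
  obtain ⟨⟨hpos, hB⟩, h0⟩ := hα
  rcases (hpos ⟨2 * n, by omega⟩).eq_or_lt with hlast | hlast
  · exact Or.inl ⟨⟨hB, h0, hlast.symm⟩, hpos⟩
  obtain ⟨p, q, hpq, hq, hcoord⟩ := exists_coord_eq_of_last_pos hn α h0 hB hlast
  have hsum := add_σmap_eq_of_coord_eq hn hpq hq hcoord
  by_cases hpr : p = 2 * n - 1 - q
  · refine Or.inr (Or.inl ⟨1, one_pos, ?_⟩)
    rw [hsum, ← hpr, segment_self]
    funext k
    simp [σmap]
  · exact Or.inr (Or.inr ⟨_, segment_mem_Δ0' hn hpr (by omega) (by omega),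
      σmap_segment_ne hpr (by omega) (by omega), hsum⟩)

lemma δ_add_add_σmap_apply_zero {β : Q n} (hβ : β ∈ Δ0' n) : (δ n + β + σmap n β) 0 = 1 := by
  rw [add_assoc, Pi.add_apply, add_σmap_apply_zero, δ_apply_zero, hβ.2.1, hβ.2.2, add_zero,
    add_zero]

lemma four_dvd_sum_sq_sub_of_antisymm (b : ℕ → ℤ) (h0 : b 0 = 0)
    (hb : ∀ k ≤ 2 * n, b (2 * n - k) = -b k) :
    4 ∣ ∑ m ∈ range (2 * n), (b (m + 1) - b m) ^ 2 := by
  set d := fun m => b (m + 1) - b m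
  have hd : ∀ m < n, d (n + (n - 1 - m)) = d m := by
    intro m hm
    simp only [d]
    rw [show n + (n - 1 - m) + 1 = 2 * n - m by omega,
      show n + (n - 1 - m) = 2 * n - (m + 1) by omega, hb m (by omega), hb (m + 1) (by omega)]
    ring
  have hhalf : ∑ m ∈ range (2 * n), d m ^ 2 = 2 * ∑ m ∈ range n, d m ^ 2 := by
    have hsecond : ∑ m ∈ range n, d (n + (n - 1 - m)) ^ 2 = ∑ m ∈ range n, d m ^ 2 :=
      Finset.sum_congr rfl fun m hm => by rw [hd m (Finset.mem_range.mp hm)]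
    rw [two_mul, Finset.sum_range_add, ← Finset.sum_range_reflect (fun m => d (n + m) ^ 2) n,
      hsecond, two_mul]
  have hmid : b n = 0 := by
    have := hb n (by omega)
    rw [show 2 * n - n = n by omega] at this
    omega
  have htel : ∑ m ∈ range n, d m = 0 := by rw [Finset.sum_range_sub, hmid, h0, sub_zero]
  have heven : Even (∑ m ∈ range n, d m ^ 2) := by
    have : Even (∑ m ∈ range n, (d m ^ 2 + d m)) :=
      Finset.even_sum _ fun m _ => by rw [sq, ← mul_add_one]; exact Int.even_mul_succ_self _
    rwa [Finset.sum_add_distrib, htel, add_zero] at this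
  obtain ⟨c, hc⟩ := heven
  exact ⟨c, by simp only [d] at hhalf; rw [hhalf, hc]; ring⟩

lemma add_σmap_ne_zero (hn : 2 ≤ n) {β : Q n} (hβ : β ∈ Δ0' n) : β + σmap n β ≠ 0 := by
  obtain ⟨hB, h0, hlast⟩ := hβ
  intro h
  have hanti : ∀ k ≤ 2 * n, coord n β (2 * n - k) = -coord n β k := by
    intro k hk
    have := congrFun h ⟨k, by omega⟩
    rw [Pi.add_apply, σmap_apply, ← coord_val β, Pi.zero_apply] at this
    linarith
  have := four_dvd_sum_sq_sub_of_antisymm (coord n β) (by rw [coord_zero, h0]) hanti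
  rw [← B_self_eq_sum_sq_sub hn β h0 hlast, hB] at this
  omega

theorem statement5 (n : ℕ) (hn : 2 ≤ n) : ∀ α ∈ Δ0Pos n,
    ((α ∈ Δ0'Pos n) ∨
      (∃ m : ℤ, 0 < m ∧ α + σmap n α = m • δ n) ∨
      (∃ β ∈ Δ0' n, σmap n β ≠ β ∧ α + σmap n α = δ n + β + σmap n β)) ∧
    ¬((α ∈ Δ0'Pos n) ∧ (∃ m : ℤ, 0 < m ∧ α + σmap n α = m • δ n)) ∧
    ¬((α ∈ Δ0'Pos n) ∧
      (∃ β ∈ Δ0' n, σmap n β ≠ β ∧ α + σmap n α = δ n + β + σmap n β)) ∧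
    ¬((∃ m : ℤ, 0 < m ∧ α + σmap n α = m • δ n) ∧
      (∃ β ∈ Δ0' n, σmap n β ≠ β ∧ α + σmap n α = δ n + β + σmap n β)) := by
  intro α hα
  have hα0 : (α + σmap n α) 0 = α ⟨2 * n, by omega⟩ := by
    rw [add_σmap_apply_zero, hα.2, zero_add]
  refine ⟨mem_Δ0'Pos_or_add_σmap_eq hn hα, ?_, ?_, ?_⟩
  · rintro ⟨⟨⟨-, -, hlast⟩, -⟩, m, hm, h⟩
    have := congrFun h 0
    rw [hα0, hlast, Pi.smul_apply, δ_apply_zero, smul_eq_mul, mul_one] at this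
    omega
  · rintro ⟨⟨⟨-, -, hlast⟩, -⟩, β, hβ, -, h⟩
    have := congrFun h 0
    rw [hα0, hlast, δ_add_add_σmap_apply_zero hβ] at this
    omega
  · rintro ⟨⟨m, -, hb⟩, β, hβ, -, hc⟩
    have hm : m = 1 := by
      have := (congrFun hb 0).symm.trans (congrFun hc 0)
      rwa [δ_add_add_σmap_apply_zero hβ, Pi.smul_apply, δ_apply_zero, smul_eq_mul, mul_one] at this
    rw [hm, one_smul] at hb
    have := hb.symm.trans hc
    rw [add_assoc, left_eq_add] at this
    exact add_σmap_ne_zero hn hβ this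

end Stmt5
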